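/- arXiv:0908.3102 — 3 statements merged into one kernel-verified Lean document; each statement's English description precedes it below -/
import Mathlib

section
/- Let ε₁,…,εₙ ∈ ℝ, Z₁,…,Zₙ ∈ {0,1}, λ ∈ ℝ with 1 + λ Zⱼ εⱼ > 0 for all j and ∑ⱼ Zⱼεⱼ/(1+λZⱼεⱼ) = 0. Then |λ| · (1/n) ∑_{j=1}^n Zⱼ εⱼ² ≤ |(1/n) ∑_{j=1}^n Zⱼ εⱼ| · (1 + |λ| · max_{1≤j≤n} |Zⱼ εⱼ|). -/
/-!
Write `xⱼ = Zⱼ εⱼ`. Since `xⱼ / (1 + λ xⱼ) = xⱼ - λ xⱼ² / (1 + λ xⱼ)`, the constraint gives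
`∑ xⱼ = λ T` with `T = ∑ xⱼ² / (1 + λ xⱼ) ≥ 0`, so `|∑ xⱼ| = |λ| T`. Bounding each denominator
by `1 + |λ| maxⱼ |xⱼ|` gives `∑ xⱼ² ≤ T (1 + |λ| maxⱼ |xⱼ|)`; multiply by `|λ|`.
Finally `Zⱼ εⱼ² = xⱼ²` because `Zⱼ ∈ {0, 1}`.
-/

open Finset

lemma div_one_add_mul_eq_sub {x lam : ℝ} (h : 1 + lam * x ≠ 0) :
    x / (1 + lam * x) = x - lam * (x ^ 2 / (1 + lam * x)) := by
  rw [eq_sub_iff_add_eq, mul_div_assoc', ← add_div, div_eq_iff h]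
  ring

section
variable {ι : Type*} (s : Finset ι) (x : ι → ℝ) {lam : ℝ}

lemma sum_eq_mul_sum_sq_div_of_sum_div_eq_zero (hpos : ∀ j ∈ s, 1 + lam * x j ≠ 0)
    (hsum : ∑ j ∈ s, x j / (1 + lam * x j) = 0) :
    ∑ j ∈ s, x j = lam * ∑ j ∈ s, x j ^ 2 / (1 + lam * x j) := by
  rw [sum_congr rfl fun j hj => div_one_add_mul_eq_sub (hpos j hj), sum_sub_distrib,
    ← mul_sum, sub_eq_zero] at hsum
  exact hsum

lemma sq_le_sq_div_mul_of_abs_le {x M : ℝ} (hpos : 0 < 1 + lam * x) (hx : |x| ≤ M) :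
    x ^ 2 ≤ x ^ 2 / (1 + lam * x) * (1 + |lam| * M) := by
  have hden : 1 + lam * x ≤ 1 + |lam| * M := by
    have := (le_abs_self (lam * x)).trans
      ((abs_mul lam x).trans_le (mul_le_mul_of_nonneg_left hx (abs_nonneg lam)))
    linarith
  rw [div_mul_eq_mul_div, le_div_iff₀ hpos]
  exact mul_le_mul_of_nonneg_left hden (sq_nonneg x)

lemma abs_mul_sum_sq_le_abs_sum_mul {M : ℝ} (hpos : ∀ j ∈ s, 0 < 1 + lam * x j)
    (hsum : ∑ j ∈ s, x j / (1 + lam * x j) = 0) (hM : ∀ j ∈ s, |x j| ≤ M) :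
    |lam| * ∑ j ∈ s, x j ^ 2 ≤ |∑ j ∈ s, x j| * (1 + |lam| * M) := by
  set T := ∑ j ∈ s, x j ^ 2 / (1 + lam * x j)
  have hT : 0 ≤ T := sum_nonneg fun j hj => div_nonneg (sq_nonneg _) (hpos j hj).le
  have hsum_abs : |∑ j ∈ s, x j| = |lam| * T := by
    rw [sum_eq_mul_sum_sq_div_of_sum_div_eq_zero s x (fun j hj => (hpos j hj).ne') hsum,
      abs_mul, abs_of_nonneg hT]
  have hsq : ∑ j ∈ s, x j ^ 2 ≤ T * (1 + |lam| * M) := by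
    rw [sum_mul]
    exact sum_le_sum fun j hj => sq_le_sq_div_mul_of_abs_le (hpos j hj) (hM j hj)
  rw [hsum_abs, mul_assoc]
  exact mul_le_mul_of_nonneg_left hsq (abs_nonneg lam)

end

/-- The key deterministic inequality in the proof of Lemma 3.1: if `1 + λ Z j ε j > 0` for
all `j` and `∑ Z j ε j / (1 + λ Z j ε j) = 0`, then
`|λ| ⬝ (1/n) ∑ Z j ε j ^ 2 ≤ |(1/n) ∑ Z j ε j| ⬝ (1 + |λ| ⬝ max j |Z j ε j|)`. -/
theorem el_lambda_bound {n : ℕ} (hn : 0 < n) (ε Z : Fin n → ℝ)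
    (hZ : ∀ j, Z j = 0 ∨ Z j = 1) (lam : ℝ)
    (hpos : ∀ j, 0 < 1 + lam * Z j * ε j)
    (hsum : ∑ j, Z j * ε j / (1 + lam * Z j * ε j) = 0) :
    |lam| * ((1 / (n : ℝ)) * ∑ j, Z j * ε j ^ 2)
      ≤ |(1 / (n : ℝ)) * ∑ j, Z j * ε j| *
        (1 + |lam| * (Finset.univ.sup' (Finset.univ_nonempty_iff.mpr
          (Fin.pos_iff_nonempty.mp hn)) fun j => |Z j * ε j|)) := by
  have hsq : ∀ j, Z j * ε j ^ 2 = (Z j * ε j) ^ 2 := fun j => by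
    rcases hZ j with h | h <;> simp [h]
  simp_rw [mul_assoc] at hpos hsum
  have key := abs_mul_sum_sq_le_abs_sum_mul (M := univ.sup' (univ_nonempty_iff.mpr
    (Fin.pos_iff_nonempty.mp hn)) fun j => |Z j * ε j|) univ (fun j => Z j * ε j)
    (fun j _ => hpos j) hsum (fun j hj => le_sup' (fun j => |Z j * ε j|) hj)
  have hn_inv : (0 : ℝ) ≤ 1 / n := by positivity
  simp_rw [hsq]
  rw [abs_mul, abs_of_nonneg hn_inv, mul_left_comm, mul_assoc]
  exact mul_le_mul_of_nonneg_left key hn_inv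
end

section
/- Let ε and (X,Y) be random variables with ε square-integrable, Eε = 0, Var ε = σ² > 0, and let h̄(ε) = E[h(X,Y)|ε] for a square-integrable h. Define s*(ε) = (EZ)^{-1}[h̄(ε) − E h̄(ε) − σ^{-2} E{ε h̄(ε)} · ε], where Z ∈ {0,1} is independent of ε with EZ > 0. Then s* ∈ S, i.e., E[s*(ε)] = 0 and E[ε s*(ε)] = 0, and E[Z s*(ε) s(ε)] = E[h(X,Y) s(ε)] for every s with E s(ε) = 0 and E[ε s(ε)] = 0. -/
open MeasureTheory ProbabilityTheory

/-! `s*` is `(EZ)⁻¹` times the residual of `h̄(ε)` after least-squares regression on `1` and `ε`;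
since `Eε = 0` and `Eε² = σ²`, this residual is orthogonal to `1` and `ε`, and against any `s ∈ S`
it integrates like `h̄(ε)` itself. Independence of `Z` and `ε` turns `E[Z s*(ε) s(ε)]` into
`EZ · E[s*(ε) s(ε)] = E[h̄(ε) s(ε)]`, and the tower property replaces `h̄(ε)` by `h(X,Y)`. -/

section Regression

variable {Ω : Type*} [MeasurableSpace Ω] {μ : Measure Ω}

/-- The residual of `G` after regressing it on `1` and `ε`, when `Eε = 0` and `Eε² = σ2`. -/
noncomputable def regressionResidual (μ : Measure Ω) (ε : Ω → ℝ) (σ2 : ℝ) (G : Ω → ℝ) :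
    Ω → ℝ :=
  fun ω => G ω - ∫ ω', G ω' ∂μ - (∫ ω', ε ω' * G ω' ∂μ) / σ2 * ε ω

lemma integral_mul_regressionResidual [IsFiniteMeasure μ] {ε G S : Ω → ℝ} (σ2 : ℝ)
    (hε : MemLp ε 2 μ) (hG : MemLp G 2 μ) (hS : MemLp S 2 μ) :
    ∫ ω, S ω * regressionResidual μ ε σ2 G ω ∂μ =
      ∫ ω, S ω * G ω ∂μ - (∫ ω, S ω ∂μ) * ∫ ω, G ω ∂μ -
        (∫ ω, ε ω * G ω ∂μ) / σ2 * ∫ ω, ε ω * S ω ∂μ := by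
  have hSG : Integrable (fun ω => S ω * G ω) μ := hS.integrable_mul hG
  have hSε : Integrable (fun ω => ε ω * S ω) μ := hε.integrable_mul hS
  have hSc : Integrable (fun ω => S ω * ∫ ω', G ω' ∂μ) μ :=
    (hS.integrable one_le_two).mul_const _
  have hSGc : Integrable (fun ω => S ω * G ω - S ω * ∫ ω', G ω' ∂μ) μ := hSG.sub hSc
  simp only [regressionResidual, mul_sub]
  simp_rw [mul_left_comm (S _) (_ / σ2), mul_comm (S _) (ε _)]
  rw [integral_sub hSGc (hSε.const_mul _), integral_sub hSG hSc, integral_mul_const,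
    integral_const_mul]

variable [IsProbabilityMeasure μ] {ε G : Ω → ℝ} {σ2 : ℝ}

lemma integral_regressionResidual (hε : MemLp ε 2 μ) (hG : MemLp G 2 μ)
    (hεmean : ∫ ω, ε ω ∂μ = 0) :
    ∫ ω, regressionResidual μ ε σ2 G ω ∂μ = 0 := by
  simpa [hεmean] using integral_mul_regressionResidual σ2 hε hG (memLp_const (1 : ℝ))

lemma integral_mul_regressionResidual_self (hε : MemLp ε 2 μ) (hG : MemLp G 2 μ)
    (hεmean : ∫ ω, ε ω ∂μ = 0) (hεvar : ∫ ω, ε ω ^ 2 ∂μ = σ2) (hσ2 : σ2 ≠ 0) :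
    ∫ ω, ε ω * regressionResidual μ ε σ2 G ω ∂μ = 0 := by
  simp_rw [sq] at hεvar
  rw [integral_mul_regressionResidual σ2 hε hG hε, hεmean, hεvar]
  field_simp
  ring

lemma integral_mul_regressionResidual_of_orthogonal {S : Ω → ℝ} (hε : MemLp ε 2 μ)
    (hG : MemLp G 2 μ) (hS : MemLp S 2 μ) (hSmean : ∫ ω, S ω ∂μ = 0)
    (hSε : ∫ ω, ε ω * S ω ∂μ = 0) :
    ∫ ω, S ω * regressionResidual μ ε σ2 G ω ∂μ = ∫ ω, S ω * G ω ∂μ := by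
  rw [integral_mul_regressionResidual σ2 hε hG hS, hSmean, hSε]
  ring

end Regression

lemma MeasureTheory.integral_mul_eq_integral_condExp_mul {Ω : Type*} {m m₀ : MeasurableSpace Ω}
    {μ : Measure Ω} (hm : m ≤ m₀) [SigmaFinite (μ.trim hm)] {H ψ : Ω → ℝ}
    (hψ : StronglyMeasurable[m] ψ) (hHψ : Integrable (H * ψ) μ) (hH : Integrable H μ) :
    ∫ ω, H ω * ψ ω ∂μ = ∫ ω, (μ[H | m]) ω * ψ ω ∂μ := by
  rw [← integral_condExp hm]
  exact integral_congr_ae (condExp_mul_of_stronglyMeasurable_right hψ hHψ hH)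

lemma ProbabilityTheory.IndepFun.integral_mul_comp {Ω β : Type*} [MeasurableSpace Ω]
    [MeasurableSpace β] {μ : Measure Ω} {X : Ω → ℝ} {Y : Ω → β} (hXY : IndepFun X Y μ)
    (hX : AEStronglyMeasurable X μ) (hY : Measurable Y) {f : β → ℝ} (hf : Measurable f) :
    ∫ ω, X ω * f (Y ω) ∂μ = (∫ ω, X ω ∂μ) * ∫ ω, f (Y ω) ∂μ :=
  (hXY.comp measurable_id hf).integral_fun_mul_eq_mul_integral hX
    (hf.comp hY).aestronglyMeasurable

theorem sstar_in_S_and_eq47_general {Ω : Type*} [MeasurableSpace Ω]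
    (μ : Measure Ω) [IsProbabilityMeasure μ]
    (ε : Ω → ℝ) (hε : Measurable ε)
    (H : Ω → ℝ) (hH2 : MemLp H 2 μ)   -- H = h(X,Y)
    (hbar : ℝ → ℝ) (hhbar : Measurable hbar)
    (hhbar2 : MemLp (fun ω => hbar (ε ω)) 2 μ)
    -- h̄ ∘ ε is a version of the conditional expectation of H given ε
    (hcond : μ[H | MeasurableSpace.comap ε inferInstance] =ᵐ[μ] fun ω => hbar (ε ω))
    (Z : Ω → ℝ) (hZ : Measurable Z)
    (hZpos : 0 < ∫ ω, Z ω ∂μ)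
    (hindep : ProbabilityTheory.IndepFun Z ε μ)
    (hε2 : MemLp ε 2 μ) (hεmean : ∫ ω, ε ω ∂μ = 0)
    (σ2 : ℝ) (hσ2 : 0 < σ2) (hεvar : ∫ ω, ε ω ^ 2 ∂μ = σ2)
    (sstar : ℝ → ℝ)
    (hsstar : ∀ y, sstar y = (∫ ω, Z ω ∂μ)⁻¹ *
      (hbar y - (∫ ω, hbar (ε ω) ∂μ) - (∫ ω, ε ω * hbar (ε ω) ∂μ) / σ2 * y)) :
    ((∫ ω, sstar (ε ω) ∂μ = 0) ∧ (∫ ω, ε ω * sstar (ε ω) ∂μ = 0)) ∧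
      ∀ s : ℝ → ℝ, Measurable s → MemLp (fun ω => s (ε ω)) 2 μ →
        (∫ ω, s (ε ω) ∂μ = 0) → (∫ ω, ε ω * s (ε ω) ∂μ = 0) →
        ∫ ω, Z ω * sstar (ε ω) * s (ε ω) ∂μ = ∫ ω, H ω * s (ε ω) ∂μ := by
  have hsstar_r : ∀ ω, sstar (ε ω) =
      (∫ ω, Z ω ∂μ)⁻¹ * regressionResidual μ ε σ2 (fun ω => hbar (ε ω)) ω :=
    fun ω => hsstar (ε ω)
  have hsstar_meas : Measurable sstar := by
    rw [funext hsstar]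
    fun_prop
  refine ⟨⟨?_, ?_⟩, fun s hs hs2 hsmean hsε => ?_⟩
  · simp_rw [hsstar_r, integral_const_mul, integral_regressionResidual hε2 hhbar2 hεmean,
      mul_zero]
  · simp_rw [hsstar_r, mul_left_comm (ε _), integral_const_mul,
      integral_mul_regressionResidual_self hε2 hhbar2 hεmean hεvar hσ2.ne', mul_zero]
  have tower : ∫ ω, H ω * s (ε ω) ∂μ = ∫ ω, hbar (ε ω) * s (ε ω) ∂μ := by
    rw [integral_mul_eq_integral_condExp_mul (ψ := fun ω => s (ε ω)) hε.comap_le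
      (hs.comp (comap_measurable ε)).stronglyMeasurable (hH2.integrable_mul hs2)
      (hH2.integrable one_le_two)]
    exact integral_congr_ae (hcond.mul .rfl)
  calc ∫ ω, Z ω * sstar (ε ω) * s (ε ω) ∂μ
      = (∫ ω, Z ω ∂μ) * ∫ ω, sstar (ε ω) * s (ε ω) ∂μ := by
        simp_rw [mul_assoc]
        exact hindep.integral_mul_comp hZ.aestronglyMeasurable hε (hsstar_meas.mul hs)
    _ = ∫ ω, s (ε ω) * regressionResidual μ ε σ2 (fun ω => hbar (ε ω)) ω ∂μ := by
        simp_rw [hsstar_r, mul_assoc, integral_const_mul, mul_comm (regressionResidual _ _ _ _ _)]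
        field_simp
    _ = ∫ ω, H ω * s (ε ω) ∂μ := by
        rw [integral_mul_regressionResidual_of_orthogonal hε2 hhbar2 hs2 hsmean hsε, tower]
        simp_rw [mul_comm]

/-- Verification of equation (4.7): with `h̄(ε) = E[h(X,Y) | ε]`, `Eε = 0`, `Var ε = σ² > 0`,
`Z ∈ {0,1}` independent of `ε` with `EZ > 0`, the function
`s*(ε) = (EZ)⁻¹ [h̄(ε) - E h̄(ε) - σ⁻² E{ε h̄(ε)} ε]` lies in `S` (i.e. `E s*(ε) = 0` and
`E[ε s*(ε)] = 0`) and satisfies `E[Z s*(ε) s(ε)] = E[h(X,Y) s(ε)]` for every `s ∈ S`. -/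
theorem sstar_in_S_and_eq47 {Ω : Type*} [MeasurableSpace Ω]
    (μ : Measure Ω) [IsProbabilityMeasure μ]
    (ε : Ω → ℝ) (hε : Measurable ε)
    (H : Ω → ℝ) (hH : Measurable H) (hH2 : MemLp H 2 μ)   -- H = h(X,Y)
    (hbar : ℝ → ℝ) (hhbar : Measurable hbar)
    (hhbar2 : MemLp (fun ω => hbar (ε ω)) 2 μ)
    -- h̄ ∘ ε is a version of the conditional expectation of H given ε
    (hcond : μ[H | MeasurableSpace.comap ε inferInstance] =ᵐ[μ] fun ω => hbar (ε ω))
    (Z : Ω → ℝ) (hZ : Measurable Z) (hZ01 : ∀ ω, Z ω = 0 ∨ Z ω = 1)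
    (hZpos : 0 < ∫ ω, Z ω ∂μ)
    (hindep : ProbabilityTheory.IndepFun Z ε μ)
    (hε2 : MemLp ε 2 μ) (hεmean : ∫ ω, ε ω ∂μ = 0)
    (σ2 : ℝ) (hσ2 : 0 < σ2) (hεvar : ∫ ω, ε ω ^ 2 ∂μ = σ2)
    (sstar : ℝ → ℝ)
    (hsstar : ∀ y, sstar y = (∫ ω, Z ω ∂μ)⁻¹ *
      (hbar y - (∫ ω, hbar (ε ω) ∂μ) - (∫ ω, ε ω * hbar (ε ω) ∂μ) / σ2 * y)) :
    ((∫ ω, sstar (ε ω) ∂μ = 0) ∧ (∫ ω, ε ω * sstar (ε ω) ∂μ = 0)) ∧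
      ∀ s : ℝ → ℝ, Measurable s → MemLp (fun ω => s (ε ω)) 2 μ →
        (∫ ω, s (ε ω) ∂μ = 0) → (∫ ω, ε ω * s (ε ω) ∂μ = 0) →
        ∫ ω, Z ω * sstar (ε ω) * s (ε ω) ∂μ = ∫ ω, H ω * s (ε ω) ∂μ :=
  sstar_in_S_and_eq47_general μ ε hε H hH2 hbar hhbar hhbar2 hcond Z hZ hZpos hindep hε2 hεmean σ2
    hσ2 hεvar sstar hsstar
end

section
/- Let V₀ = {v ∈ L²(M) : ∫ v(x,y) Q(x,dy) = 0 M-a.e.} where Q(x,dy) = f(y − r ϑ x) dy with f a mean-zero density, and let V = {v(x,y) = s(y − r ϑ x) + ℓ(y − r ϑ x)·(ṙ ϑ x)ᵀt : s ∈ S, t ∈ ℝ^p}, where S = {s ∈ L²(F) : ∫ s f = 0, ∫ y s(y) f(y) dy = 0} and ℓ = −f'/f with E ℓ(ε) = 0. Then V ⊆ V₀, and every element of V can be rewritten as tᵀζ + s̃(ε) with s̃ ∈ S and ζ = (ṙ ϑ X − μ)ℓ(ε) + μ ε/σ², μ = E[ṙ ϑ X|Z=1]; specifically s̃(ε) = s(ε)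 + tᵀμ·(ℓ(ε) − ε/σ²). -/
open MeasureTheory

/-!
A perturbation `v(x, y) = s(ε) + ℓ(ε) ṙᵀt` with `ε = y - r x` integrates to zero against
`f(y - r x) dy` after translating by `r x`, because `s` and `ℓ` are both centred under `f`.
The space `S` of `f`-centred, `f`-uncorrelated functions is a linear subspace, and the
projection `ℓ(ε) - ε / σ²` of the score lies in it: its two moments are `0 - 0 / σ²` and
`1 - σ² / σ²`. Hence `s̃ = s + (tᵀμ) (ℓ - id / σ²) ∈ S`, and `v = tᵀζ + s̃(ε)` is a
rearrangement of finite sums.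
-/

/-- The paper's `S`, with integrability of both products built in so that it is a subspace. -/
def centredUncorrelated (f : ℝ → ℝ) : Submodule ℝ (ℝ → ℝ) where
  carrier := {s | Integrable (fun y => s y * f y) ∧ Integrable (fun y => y * s y * f y) ∧
    ∫ y, s y * f y = 0 ∧ ∫ y, y * s y * f y = 0}
  add_mem' := by
    rintro s s' ⟨hs, hys, hs0, hys0⟩ ⟨hs', hys', hs'0, hys'0⟩
    simp only [Set.mem_ofPred_eq, Pi.add_apply, add_mul, mul_add]
    exact ⟨hs.add hs', hys.add hys', by rw [integral_add hs hs', hs0, hs'0, add_zero],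
      by rw [integral_add hys hys', hys0, hys'0, add_zero]⟩
  zero_mem' := by simp
  smul_mem' := by
    rintro c s ⟨hs, hys, hs0, hys0⟩
    simp only [Set.mem_ofPred_eq, Pi.smul_apply, smul_eq_mul]
    have hcs : (fun y => c * s y * f y) = fun y => c * (s y * f y) := by ext; ring
    have hcys : (fun y => y * (c * s y) * f y) = fun y => c * (y * s y * f y) := by ext; ring
    rw [hcs, hcys, integral_const_mul, integral_const_mul, hs0, hys0, mul_zero]
    exact ⟨hs.const_mul c, hys.const_mul c, rfl, rfl⟩

theorem mem_centredUncorrelated {f s : ℝ → ℝ} :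
    s ∈ centredUncorrelated f ↔ Integrable (fun y => s y * f y) ∧
      Integrable (fun y => y * s y * f y) ∧ ∫ y, s y * f y = 0 ∧ ∫ y, y * s y * f y = 0 :=
  Iff.rfl

theorem score_sub_div_mem_centredUncorrelated {f ℓ : ℝ → ℝ} {σ2 : ℝ} (hσ2 : σ2 ≠ 0)
    (hfmean : ∫ y, y * f y = 0) (hfvar : ∫ y, y ^ 2 * f y = σ2)
    (hℓ0 : ∫ y, ℓ y * f y = 0) (hℓ1 : ∫ y, y * ℓ y * f y = 1)
    (hℓf : Integrable (fun y => ℓ y * f y)) (hyℓf : Integrable (fun y => y * ℓ y * f y))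
    (hyf : Integrable (fun y => y * f y)) (hy2f : Integrable (fun y => y ^ 2 * f y)) :
    (fun y => ℓ y - y / σ2) ∈ centredUncorrelated f := by
  have hmean : (fun y => (ℓ y - y / σ2) * f y) = fun y => ℓ y * f y - σ2⁻¹ * (y * f y) := by
    ext; ring
  have hvar : (fun y => y * (ℓ y - y / σ2) * f y) =
      fun y => y * ℓ y * f y - σ2⁻¹ * (y ^ 2 * f y) := by
    ext; ring
  have hσf := hyf.const_mul σ2⁻¹
  have hσf2 := hy2f.const_mul σ2⁻¹
  rw [mem_centredUncorrelated, hmean, hvar, integral_sub hℓf hσf, integral_sub hyℓf hσf2,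
    integral_const_mul, integral_const_mul, hfmean, hfvar, hℓ0, hℓ1, inv_mul_cancel₀ hσ2]
  exact ⟨hℓf.sub hσf, hyℓf.sub hσf2, by ring, sub_self 1⟩

theorem integral_translate_add_mul_eq_zero {f g h : ℝ → ℝ} (a c : ℝ)
    (hg : Integrable (fun y => g y * f y)) (hh : Integrable (fun y => h y * f y))
    (hg0 : ∫ y, g y * f y = 0) (hh0 : ∫ y, h y * f y = 0) :
    ∫ y, (g (y - a) + h (y - a) * c) * f (y - a) = 0 := by
  have hsplit : (fun e => (g e + h e * c) * f e) = fun e => g e * f e + c * (h e * f e) := by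
    ext; ring
  rw [integral_sub_right_eq_self (fun e => (g e + h e * c) * f e) a, hsplit,
    integral_add hg (hh.const_mul c), integral_const_mul, hg0, hh0, mul_zero, add_zero]

theorem sum_mul_centred_add_eq {ι : Type*} [Fintype ι] (t a m : ι → ℝ) (s L e σ2 : ℝ) :
    (∑ i, t i * ((a i - m i) * L + m i * e / σ2)) + (s + (∑ i, t i * m i) * (L - e / σ2)) =
      s + L * ∑ i, a i * t i := by
  have hterm : ∑ i, t i * ((a i - m i) * L + m i * e / σ2) =
      ∑ i, (L * (a i * t i) - (L - e / σ2) * (t i * m i)) :=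
    Finset.sum_congr rfl fun i _ => by ring
  rw [hterm, Finset.sum_sub_distrib, ← Finset.mul_sum, ← Finset.mul_sum]
  ring

theorem tangent_space_decomposition_general {𝓧 : Type*} {p : ℕ}
    (f : ℝ → ℝ)
    (hfmean : ∫ y, y * f y = 0)
    (σ2 : ℝ) (hσ2 : 0 < σ2) (hfvar : ∫ y, y ^ 2 * f y = σ2)
    (ℓ : ℝ → ℝ)
    (hℓ0 : ∫ y, ℓ y * f y = 0) (hℓ1 : ∫ y, y * ℓ y * f y = 1)
    (r : 𝓧 → ℝ) (rdot : 𝓧 → Fin p → ℝ)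
    (μvec : Fin p → ℝ)   -- μ = E[ṙ ϑ X | Z = 1]
    (s : ℝ → ℝ)
    (hs : (∫ y, s y * f y = 0) ∧ (∫ y, y * s y * f y = 0))   -- s ∈ S
    (hsf : Integrable (fun y => s y * f y))
    (hysf : Integrable (fun y => y * s y * f y))
    (hℓf : Integrable (fun y => ℓ y * f y))
    (hyℓf : Integrable (fun y => y * ℓ y * f y))
    (hyf : Integrable (fun y => y * f y))
    (hy2f : Integrable (fun y => y ^ 2 * f y))
    (t : Fin p → ℝ)
    (v : 𝓧 → ℝ → ℝ)
    (hv : ∀ x y, v x y = s (y - r x) + ℓ (y - r x) * ∑ i, rdot x i * t i)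
    (ζ : 𝓧 → ℝ → Fin p → ℝ)
    (hζ : ∀ x e i, ζ x e i = (rdot x i - μvec i) * ℓ e + μvec i * e / σ2)
    (stilde : ℝ → ℝ)
    (hstilde : ∀ e, stilde e = s e + (∑ i, t i * μvec i) * (ℓ e - e / σ2)) :
    -- V ⊆ V₀ : the perturbation integrates to zero under Q(x, dy) = f(y - r ϑ x) dy
    (∀ x, ∫ y, v x y * f (y - r x) = 0) ∧
    -- rewriting v as tᵀ ζ + s̃(ε)
    (∀ x e, v x (r x + e) = (∑ i, t i * ζ x e i) + stilde e) ∧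
    -- s̃ ∈ S
    ((∫ y, stilde y * f y = 0) ∧ (∫ y, y * stilde y * f y = 0)) := by
  have hsS : s ∈ centredUncorrelated f := ⟨hsf, hysf, hs⟩
  have hℓS := score_sub_div_mem_centredUncorrelated hσ2.ne' hfmean hfvar hℓ0 hℓ1 hℓf hyℓf
    hyf hy2f
  have hstildeS : stilde ∈ centredUncorrelated f := by
    have hsum := add_mem hsS (Submodule.smul_mem _ (∑ i, t i * μvec i) hℓS)
    convert hsum using 1
    ext e
    simp [hstilde]
  refine ⟨fun x => ?_, fun x e => ?_, hstildeS.2.2⟩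
  · simp_rw [hv]
    exact integral_translate_add_mul_eq_zero _ _ hsf hℓf hs.1 hℓ0
  · simp_rw [hv, hζ, hstilde, add_sub_cancel_left]
    exact (sum_mul_centred_add_eq _ _ _ _ _ _ _).symm

/-- Tangent-space decomposition of Section 4: every perturbation
`v(x,y) = s(y - r ϑ x) + ℓ(y - r ϑ x) (ṙ ϑ x)ᵀ t` with `s ∈ S` satisfies
`∫ v(x,y) Q(x,dy) = 0` (so `V ⊆ V₀`), and can be rewritten as `tᵀ ζ + s̃(ε)` with
`ζ = (ṙ ϑ x - μ) ℓ(ε) + μ ε / σ²` and `s̃(ε) = s(ε) + tᵀμ (ℓ(ε) - ε/σ²) ∈ S`. -/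
theorem tangent_space_decomposition {𝓧 : Type*} {p : ℕ}
    (f : ℝ → ℝ) (hf0 : ∀ y, 0 ≤ f y) (hfdens : ∫ y, f y = 1)
    (hfmean : ∫ y, y * f y = 0)
    (σ2 : ℝ) (hσ2 : 0 < σ2) (hfvar : ∫ y, y ^ 2 * f y = σ2)
    (ℓ : ℝ → ℝ) (hℓdef : ∀ y, ℓ y = -(deriv f y) / f y)
    (hℓ0 : ∫ y, ℓ y * f y = 0) (hℓ1 : ∫ y, y * ℓ y * f y = 1)
    (r : 𝓧 → ℝ) (rdot : 𝓧 → Fin p → ℝ)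
    (μvec : Fin p → ℝ)   -- μ = E[ṙ ϑ X | Z = 1]
    (s : ℝ → ℝ)
    (hs : (∫ y, s y * f y = 0) ∧ (∫ y, y * s y * f y = 0))   -- s ∈ S
    (hsf : Integrable (fun y => s y * f y))
    (hysf : Integrable (fun y => y * s y * f y))
    (hℓf : Integrable (fun y => ℓ y * f y))
    (hyℓf : Integrable (fun y => y * ℓ y * f y))
    (hyf : Integrable (fun y => y * f y))
    (hy2f : Integrable (fun y => y ^ 2 * f y))
    (t : Fin p → ℝ)
    (v : 𝓧 → ℝ → ℝ)
    (hv : ∀ x y, v x y = s (y - r x) + ℓ (y - r x) * ∑ i, rdot x i * t i)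
    (ζ : 𝓧 → ℝ → Fin p → ℝ)
    (hζ : ∀ x e i, ζ x e i = (rdot x i - μvec i) * ℓ e + μvec i * e / σ2)
    (stilde : ℝ → ℝ)
    (hstilde : ∀ e, stilde e = s e + (∑ i, t i * μvec i) * (ℓ e - e / σ2)) :
    -- V ⊆ V₀ : the perturbation integrates to zero under Q(x, dy) = f(y - r ϑ x) dy
    (∀ x, ∫ y, v x y * f (y - r x) = 0) ∧
    -- rewriting v as tᵀ ζ + s̃(ε)
    (∀ x e, v x (r x + e) = (∑ i, t i * ζ x e i) + stilde e) ∧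
    -- s̃ ∈ S
    ((∫ y, stilde y * f y = 0) ∧ (∫ y, y * stilde y * f y = 0)) :=
  tangent_space_decomposition_general f hfmean σ2 hσ2 hfvar ℓ hℓ0 hℓ1 r rdot μvec s hs hsf hysf hℓf
    hyℓf hyf hy2f t v hv ζ hζ stilde hstilde
end
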